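/- arXiv:1912.05522 — 2 statements merged into one kernel-verified Lean document; each statement's English description precedes it below -/
import Mathlib

section
/- Let U be a k-dimensional Sidon space in F_{q^n} (meaning: whenever a,b,c,d ∈ U∖0 satisfy ab = cd, then {aF_q^*, bF_q^*} = {cF_q^*, dF_q^*}) with 2 ≤ k ≤ n/2. Then the number of α F_q^*-classes in F_{q^n}^* with dim_{F_q}(U ∩ αU) = 1 equals ((q^k−1)/(q−1))·((q^k−q)/(q−1)). -/
/-!
For distinct points `⟦u⟧ ≠ ⟦v⟧` of `ℙ(U)` the Sidon property forces `U ∩ (u/v)U = uF`: if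
`x = (u/v)y` lies in `U`, then `xv = uy`, so `x ∈ uF` (the alternative `v ∈ uF` is excluded).
Conversely, if `dim (U ∩ αU) = 1`, pick `w ∈ U` with `0 ≠ αw ∈ U`; then `α = (αw)/w` and
`αw ∉ wF`, for otherwise `α ∈ F` and `αU = U` has dimension `k ≥ 2`. If `(u/v)F = (u'/v')F`,
then `(zu)v' = u'v` for some `z ∈ F*`, and the Sidon property gives `⟦u⟧ = ⟦u'⟧`, `⟦v⟧ = ⟦v'⟧`.
Hence these lines correspond to ordered pairs of distinct points of `ℙ(U)`, of which there
are `N (N - 1)` with `N = (q^k - 1)/(q - 1)`.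
-/

open scoped LinearAlgebra.Projectivization
open Module Projectivization Submodule

lemma Nat.card_subtype_fst_ne_snd (α : Type*) [Finite α] :
    Nat.card {p : α × α // p.1 ≠ p.2} = Nat.card α * Nat.card α - Nat.card α := by
  classical
  have := Fintype.ofFinite α
  simp only [Nat.card_eq_fintype_card, Fintype.card_subtype]
  rw [← Finset.card_univ, ← Finset.offDiag_card]
  congr 1
  ext
  simp

lemma Projectivization.mk_eq_mk_iff_val {F V : Type*} [Field F] [AddCommGroup V] [Module F V]
    {U : Submodule F V} (x y : U) (hx : x ≠ 0) (hy : y ≠ 0) :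
    mk F x hx = mk F y hy ↔ ∃ a : F, a • (y : V) = x := by
  simp [mk_eq_mk_iff', Subtype.ext_iff]

section

variable {F K : Type*} [Field F] [Field K] [Algebra F K]

lemma Submodule.map_mulLeft_algebraMap (U : Submodule F K) {μ : F} (hμ : μ ≠ 0) :
    U.map (LinearMap.mulLeft F (algebraMap F K μ)) = U := by
  have : LinearMap.mulLeft F (algebraMap F K μ) = μ • LinearMap.id := by
    ext x; simp [Algebra.smul_def]
  rw [this, Submodule.map_smul _ _ _ hμ, map_id]

noncomputable def ratioLine {U : Submodule F K} (p q : ℙ F U) : Submodule F K :=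
  F ∙ ((p.rep : K) * (q.rep : K)⁻¹)

lemma ratioLine_mk {U : Submodule F K} (x y : U) (hx : x ≠ 0) (hy : y ≠ 0) :
    ratioLine (mk F x hx) (mk F y hy) = F ∙ ((x : K) * (y : K)⁻¹) := by
  obtain ⟨a, ha⟩ := exists_smul_eq_mk_rep F x hx
  obtain ⟨b, hb⟩ := exists_smul_eq_mk_rep F y hy
  rw [ratioLine, ← ha, ← hb, span_singleton_eq_span_singleton]
  refine ⟨b * a⁻¹, ?_⟩
  simp only [Units.smul_def, coe_smul, Algebra.smul_def, Units.val_mul]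
  field_simp
  rw [← map_mul, mul_assoc, Units.inv_mul, mul_one]
  ring

def IsSidonSpace (U : Submodule F K) : Prop :=
  ∀ a b c d : K, a ∈ U → b ∈ U → c ∈ U → d ∈ U →
    a ≠ 0 → b ≠ 0 → c ≠ 0 → d ≠ 0 → a * b = c * d →
    ((∃ μ : F, μ ≠ 0 ∧ a = μ • c) ∧ (∃ ν : F, ν ≠ 0 ∧ b = ν • d)) ∨
    ((∃ μ : F, μ ≠ 0 ∧ a = μ • d) ∧ (∃ ν : F, ν ≠ 0 ∧ b = ν • c))

variable {U : Submodule F K}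

lemma IsSidonSpace.inf_map_mulLeft_div_eq_span (hU : IsSidonSpace U) {u v : K} (hu : u ∈ U)
    (hv : v ∈ U) (hu0 : u ≠ 0) (hv0 : v ≠ 0) (huv : ∀ μ : F, μ • v ≠ u) :
    U ⊓ U.map (LinearMap.mulLeft F (u * v⁻¹)) = F ∙ u := by
  refine le_antisymm ?_ ((span_singleton_le_iff_mem _ _).mpr ⟨hu, v, hv, by simp [hv0]⟩)
  rintro _ ⟨hxU, y, hy, rfl⟩
  rcases eq_or_ne y 0 with rfl | hy0
  · simp
  simp only [LinearMap.mulLeft_apply] at hxU ⊢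
  have hx0 : u * v⁻¹ * y ≠ 0 := by simp [hu0, hv0, hy0]
  have hmul : u * v⁻¹ * y * v = u * y := by field_simp
  rcases hU _ _ _ _ hxU hv hu hy hx0 hv0 hu0 hy0 hmul with ⟨⟨μ, -, hμ⟩, -⟩ | ⟨-, ν, hν, hvu⟩
  · exact mem_span_singleton.mpr ⟨μ, hμ.symm⟩
  · exact absurd (by rw [hvu, smul_smul, inv_mul_cancel₀ hν, one_smul]) (huv ν⁻¹)

lemma IsSidonSpace.smul_eq_of_span_div_eq (hU : IsSidonSpace U) {u v u' v' : K} (hu : u ∈ U)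
    (hv : v ∈ U) (hu' : u' ∈ U) (hv' : v' ∈ U) (hu0 : u ≠ 0) (hv0 : v ≠ 0) (hu'0 : u' ≠ 0)
    (hv'0 : v' ≠ 0) (huv : ∀ μ : F, μ • v ≠ u) (h : F ∙ (u * v⁻¹) = F ∙ (u' * v'⁻¹)) :
    (∃ a : F, a • u' = u) ∧ ∃ b : F, b • v' = v := by
  obtain ⟨z, hz⟩ := span_singleton_eq_span_singleton.mp h
  rw [Units.smul_def] at hz
  have hz0 : (z : F) ≠ 0 := z.ne_zero
  have hmul : (z : F) • u * v' = u' * v := by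
    rw [Algebra.smul_def] at hz ⊢
    field_simp at hz
    linear_combination hz
  rcases hU _ _ _ _ (U.smul_mem _ hu) hv' hu' hv (smul_ne_zero hz0 hu0) hv'0 hu'0 hv0 hmul with
    ⟨⟨μ, -, hμ⟩, ν, hν, hν'⟩ | ⟨⟨μ, -, hμ⟩, -⟩
  · refine ⟨⟨(z : F)⁻¹ * μ, ?_⟩, ν⁻¹, ?_⟩
    · rw [mul_smul, ← hμ, smul_smul, inv_mul_cancel₀ hz0, one_smul]
    · rw [hν', smul_smul, inv_mul_cancel₀ hν, one_smul]
  · refine absurd ?_ (huv ((z : F)⁻¹ * μ))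
    rw [mul_smul, ← hμ, smul_smul, inv_mul_cancel₀ hz0, one_smul]

lemma exists_eq_div_of_finrank_inf_map_mulLeft_eq_one (hU : 1 < finrank F U) {α : K}
    (h : finrank F ↥(U ⊓ U.map (LinearMap.mulLeft F α)) = 1) :
    ∃ u ∈ U, ∃ v ∈ U, u ≠ 0 ∧ v ≠ 0 ∧ (∀ μ : F, μ • v ≠ u) ∧ α = u * v⁻¹ := by
  have hne : U ⊓ U.map (LinearMap.mulLeft F α) ≠ ⊥ := by
    intro hbot; rw [hbot, finrank_bot] at h; exact zero_ne_one h
  obtain ⟨_, ⟨hu, v, hv, rfl⟩, hu0⟩ := exists_mem_ne_zero_of_ne_bot hne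
  simp only [LinearMap.mulLeft_apply] at hu hu0 ⊢
  have hv0 : v ≠ 0 := right_ne_zero_of_mul hu0
  refine ⟨_, hu, v, hv, hu0, hv0, fun μ hμ => ?_, by field_simp⟩
  have hα : α = algebraMap F K μ := by
    apply mul_right_cancel₀ hv0
    rw [← hμ, Algebra.smul_def]
  have hμ0 : μ ≠ 0 := by rintro rfl; simp [hα] at hu0
  rw [hα, map_mulLeft_algebraMap U hμ0, inf_idem] at h
  omega

def MeetsInLine (U W : Submodule F K) : Prop :=
  ∃ α : K, α ≠ 0 ∧ W = F ∙ α ∧ finrank F ↥(U ⊓ U.map (LinearMap.mulLeft F α)) = 1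

lemma IsSidonSpace.meetsInLine_ratioLine (hU : IsSidonSpace U) {p q : ℙ F U} (hpq : p ≠ q) :
    MeetsInLine U (ratioLine p q) := by
  induction p using Projectivization.ind with | h x hx =>
  induction q using Projectivization.ind with | h y hy =>
  have hx0 : (x : K) ≠ 0 := by simpa using hx
  have hy0 : (y : K) ≠ 0 := by simpa using hy
  have hxy : ∀ μ : F, μ • (y : K) ≠ x := fun μ h => hpq ((mk_eq_mk_iff_val x y hx hy).mpr ⟨μ, h⟩)
  refine ⟨_, by simp [hx0, hy0], ratioLine_mk x y hx hy, ?_⟩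
  rw [hU.inf_map_mulLeft_div_eq_span x.2 y.2 hx0 hy0 hxy, finrank_span_singleton hx0]

lemma IsSidonSpace.eq_of_ratioLine_eq (hU : IsSidonSpace U) {p q p' q' : ℙ F U} (hpq : p ≠ q)
    (h : ratioLine p q = ratioLine p' q') : p = p' ∧ q = q' := by
  induction p using Projectivization.ind with | h x hx =>
  induction q using Projectivization.ind with | h y hy =>
  induction p' using Projectivization.ind with | h x' hx' =>
  induction q' using Projectivization.ind with | h y' hy' =>
  simp only [ratioLine_mk] at h
  have hxy : ∀ μ : F, μ • (y : K) ≠ x := fun μ h => hpq ((mk_eq_mk_iff_val x y hx hy).mpr ⟨μ, h⟩)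
  obtain ⟨hxx', hyy'⟩ := hU.smul_eq_of_span_div_eq x.2 y.2 x'.2 y'.2 (by simpa using hx)
    (by simpa using hy) (by simpa using hx') (by simpa using hy') hxy h
  exact ⟨(mk_eq_mk_iff_val _ _ _ _).mpr hxx', (mk_eq_mk_iff_val _ _ _ _).mpr hyy'⟩

lemma exists_ratioLine_eq_of_meetsInLine (hU : 1 < finrank F U) {W : Submodule F K}
    (hW : MeetsInLine U W) : ∃ p q : ℙ F U, p ≠ q ∧ ratioLine p q = W := by
  obtain ⟨α, -, rfl, h⟩ := hW
  obtain ⟨u, hu, v, hv, hu0, hv0, huv, rfl⟩ := exists_eq_div_of_finrank_inf_map_mulLeft_eq_one hU h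
  have hu0' : (⟨u, hu⟩ : U) ≠ 0 := by simpa using hu0
  have hv0' : (⟨v, hv⟩ : U) ≠ 0 := by simpa using hv0
  refine ⟨mk F _ hu0', mk F _ hv0', fun h => ?_, ratioLine_mk _ _ _ _⟩
  obtain ⟨μ, hμ⟩ := (mk_eq_mk_iff_val _ _ _ _).mp h
  exact huv μ hμ

noncomputable def IsSidonSpace.ratioLineEquiv (hU : IsSidonSpace U) (hU1 : 1 < finrank F U) :
    {p : ℙ F U × ℙ F U // p.1 ≠ p.2} ≃ {W : Submodule F K // MeetsInLine U W} :=
  Equiv.ofBijective (fun p => ⟨ratioLine p.1.1 p.1.2, hU.meetsInLine_ratioLine p.2⟩)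
    ⟨fun p _ h =>
      Subtype.ext (Prod.ext_iff.mpr (hU.eq_of_ratioLine_eq p.2 (congrArg Subtype.val h))),
     fun W => by
      obtain ⟨p, q, hpq, hW⟩ := exists_ratioLine_eq_of_meetsInLine hU1 W.2
      exact ⟨⟨(p, q), hpq⟩, Subtype.ext hW⟩⟩

end

theorem stmt_8_general (F K : Type) [Field F] [Field K] [Algebra F K]
    [Fintype F] (q k : ℕ)
    (hq : Fintype.card F = q)
    (hk2 : 2 ≤ k)
    (U : Submodule F K) (hk : Module.finrank F U = k)
    (hSidon : ∀ a b c d : K, a ∈ U → b ∈ U → c ∈ U → d ∈ U →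
      a ≠ 0 → b ≠ 0 → c ≠ 0 → d ≠ 0 → a * b = c * d →
      ((∃ μ : F, μ ≠ 0 ∧ a = μ • c) ∧ (∃ ν : F, ν ≠ 0 ∧ b = ν • d)) ∨
      ((∃ μ : F, μ ≠ 0 ∧ a = μ • d) ∧ (∃ ν : F, ν ≠ 0 ∧ b = ν • c))) :
    Nat.card {W : Submodule F K //
        ∃ α : K, α ≠ 0 ∧ W = Submodule.span F {α} ∧
          Module.finrank F ↥(U ⊓ Submodule.map (LinearMap.mulLeft F α) U) = 1}
      = (q ^ k - 1) / (q - 1) * ((q ^ k - q) / (q - 1)) := by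
  have hq1 : 1 < q := hq ▸ Fintype.one_lt_card
  have : Module.Finite F U := Module.finite_of_finrank_pos (by omega)
  have : Finite U := Module.finite_of_finite F
  set N := Nat.card (ℙ F U)
  have hN : q ^ k - 1 = N * (q - 1) := by
    have hcard := Projectivization.card F U
    rwa [Module.natCard_eq_pow_finrank (K := F), Nat.card_eq_fintype_card (α := F), hq, hk]
      at hcard
  have hN' : q ^ k - q = (N - 1) * (q - 1) := by
    rw [Nat.sub_one_mul, ← hN]
    omega
  refine (Nat.card_congr (IsSidonSpace.ratioLineEquiv hSidon (by omega))).symm.trans ?_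
  rw [Nat.card_subtype_fst_ne_snd, hN, hN', Nat.mul_div_cancel _ (by omega),
    Nat.mul_div_cancel _ (by omega), Nat.mul_sub_one]

/-- For a `k`-dimensional Sidon space `U` in `F_{q^n}`, the number of projective
classes `αF_q^*` with `dim(U ∩ αU) = 1` equals `((q^k-1)/(q-1))·((q^k-q)/(q-1))`. -/
theorem stmt_8 (F K : Type) [Field F] [Field K] [Algebra F K]
    [Fintype F] [Fintype K] (q n k : ℕ)
    (hq : Fintype.card F = q) (hn : Module.finrank F K = n)
    (hk2 : 2 ≤ k) (hkn : 2 * k ≤ n)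
    (U : Submodule F K) (hk : Module.finrank F U = k)
    (hSidon : ∀ a b c d : K, a ∈ U → b ∈ U → c ∈ U → d ∈ U →
      a ≠ 0 → b ≠ 0 → c ≠ 0 → d ≠ 0 → a * b = c * d →
      ((∃ μ : F, μ ≠ 0 ∧ a = μ • c) ∧ (∃ ν : F, ν ≠ 0 ∧ b = ν • d)) ∨
      ((∃ μ : F, μ ≠ 0 ∧ a = μ • d) ∧ (∃ ν : F, ν ≠ 0 ∧ b = ν • c))) :
    Nat.card {W : Submodule F K //
        ∃ α : K, α ≠ 0 ∧ W = Submodule.span F {α} ∧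
          Module.finrank F ↥(U ⊓ Submodule.map (LinearMap.mulLeft F α) U) = 1}
      = (q ^ k - 1) / (q - 1) * ((q ^ k - q) / (q - 1)) :=
  stmt_8_general F K q k hq hk2 U hk hSidon
end

section
/- Let U, V be k-dimensional F_q-subspaces of F_{q^n} generating distinct orbits (U ≠ αV for all α ∈ F_{q^n}^*) and having the two-space Sidon property (dim(U ∩ αV) ≤ 1 for all α). Then the number of classes αF_q^* with dim(U ∩ αV) = 1 equals ((q^k−1)/(q−1))^2. -/
/-!
Send a pair of points `⟨u⟩ ∈ ℙ(U)`, `⟨v⟩ ∈ ℙ(V)` to `⟨u v⁻¹⟩ ∈ ℙ(K)`. Since `u = (u v⁻¹) v`, the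
image consists exactly of the lines `⟨α⟩` with `U ∩ αV ≠ 0`, i.e. (by the Sidon property) with
`dim (U ∩ αV) = 1`. The map is injective: if `u₁ v₁⁻¹` and `u₂ v₂⁻¹` are proportional, with
`α = u₂ v₂⁻¹`, then `u₁` and `u₂` both lie in the line `U ∩ αV`, so they are proportional, and
then so are `v₁` and `v₂`. Hence the count is `|ℙ(U)| · |ℙ(V)| = ((q^k - 1)/(q - 1))^2`.
-/

open Module Projectivization
open scoped LinearAlgebra.Projectivization

variable {F K : Type*} [Field F] [Field K] [Algebra F K]

def IsSidonPair (U V : Submodule F K) : Prop :=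
  ∀ α : K, α ≠ 0 → finrank F ↥(U ⊓ V.map (LinearMap.mulLeft F α)) ≤ 1

variable {U V : Submodule F K}

lemma mem_inf_map_mulLeft_mul_inv {u v : K} (hu : u ∈ U) (hv : v ∈ V) (hv0 : v ≠ 0) :
    u ∈ U ⊓ V.map (LinearMap.mulLeft F (u * v⁻¹)) :=
  ⟨hu, v, hv, by simp [hv0]⟩

lemma exists_mul_inv_eq_of_inf_map_mulLeft_ne_bot {α : K}
    (h : U ⊓ V.map (LinearMap.mulLeft F α) ≠ ⊥) :
    ∃ u ∈ U, ∃ v ∈ V, u ≠ 0 ∧ v ≠ 0 ∧ u * v⁻¹ = α := by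
  obtain ⟨_, ⟨hwU, v, hv, rfl⟩, hw0⟩ := Submodule.exists_mem_ne_zero_of_ne_bot h
  rw [LinearMap.mulLeft_apply] at hwU hw0
  have hv0 : v ≠ 0 := right_ne_zero_of_mul hw0
  exact ⟨_, hwU, v, hv, hw0, hv0, by field_simp⟩

lemma IsSidonPair.finrank_inf_map_mulLeft_mul_inv [FiniteDimensional F K]
    (hUV : IsSidonPair U V) {u v : K} (hu : u ∈ U) (hv : v ∈ V) (hu0 : u ≠ 0) (hv0 : v ≠ 0) :
    finrank F ↥(U ⊓ V.map (LinearMap.mulLeft F (u * v⁻¹))) = 1 := by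
  refine le_antisymm (hUV _ (mul_ne_zero hu0 (inv_ne_zero hv0))) ?_
  rw [Nat.one_le_iff_ne_zero, Ne, Submodule.finrank_eq_zero]
  exact Submodule.ne_bot_iff _ |>.2 ⟨u, mem_inf_map_mulLeft_mul_inv hu hv hv0, hu0⟩

noncomputable def fractionMap (U V : Submodule F K) (p : ℙ F U × ℙ F V) : ℙ F K :=
  mk F ((p.1.rep : K) * (p.2.rep : K)⁻¹) (by simp [p.1.rep_nonzero, p.2.rep_nonzero])

lemma fractionMap_mk {u : U} {v : V} (hu : u ≠ 0) (hv : v ≠ 0) :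
    fractionMap U V (mk F u hu, mk F v hv) = mk F ((u : K) * (v : K)⁻¹) (by simp [hu, hv]) := by
  obtain ⟨a, ha⟩ := exists_smul_eq_mk_rep F u hu
  obtain ⟨b, hb⟩ := exists_smul_eq_mk_rep F v hv
  rw [fractionMap, mk_eq_mk_iff]
  refine ⟨a / b, ?_⟩
  simp only [← ha, ← hb, Submodule.coe_smul, Units.smul_def, Algebra.smul_def,
    Units.val_div_eq_div_val, map_div₀]
  have : algebraMap F K b ≠ 0 := by simp
  field_simp

namespace IsSidonPair

variable [FiniteDimensional F K]

lemma fractionMap_injective (hUV : IsSidonPair U V) : Function.Injective (fractionMap U V) := by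
  rintro ⟨p₁, r₁⟩ ⟨p₂, r₂⟩ h
  induction p₁ using ind with | h u₁ hu₁ =>
  induction r₁ using ind with | h v₁ hv₁ =>
  induction p₂ using ind with | h u₂ hu₂ =>
  induction r₂ using ind with | h v₂ hv₂ =>
  rw [fractionMap_mk, fractionMap_mk, mk_eq_mk_iff'] at h
  obtain ⟨c, hc⟩ := h
  have hu₁0 : (u₁ : K) ≠ 0 := by simpa using hu₁
  have hv₁0 : (v₁ : K) ≠ 0 := by simpa using hv₁
  have hu₂0 : (u₂ : K) ≠ 0 := by simpa using hu₂
  have hv₂0 : (v₂ : K) ≠ 0 := by simpa using hv₂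
  have hu₁mem : (u₁ : K) ∈ U ⊓ V.map (LinearMap.mulLeft F ((u₂ : K) * (v₂ : K)⁻¹)) := by
    refine ⟨u₁.2, c • v₁, V.smul_mem c v₁.2, ?_⟩
    rw [LinearMap.mulLeft_apply, mul_smul_comm, ← smul_mul_assoc, hc, inv_mul_cancel_right₀ hv₁0]
  obtain ⟨d, hd⟩ := Submodule.mem_span_singleton.1 <|
    eq_span_singleton_of_mem_of_finrank_eq_one
      (hUV.finrank_inf_map_mulLeft_mul_inv u₂.2 v₂.2 hu₂0 hv₂0)
      (mem_inf_map_mulLeft_mul_inv u₂.2 v₂.2 hv₂0) hu₂0 ▸ hu₁mem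
  have hd0 : algebraMap F K d ≠ 0 := by
    rintro h0
    rw [Algebra.smul_def, h0, zero_mul] at hd
    exact hu₁0 hd.symm
  have hv : (d⁻¹ * c) • (v₁ : K) = v₂ := by
    rw [← hd, Algebra.smul_def, Algebra.smul_def] at hc
    rw [Algebra.smul_def, map_mul, map_inv₀]
    field_simp at hc ⊢
    exact hc
  exact Prod.ext ((mk_eq_mk_iff' F _ _ hu₁ hu₂).2 ⟨d, Subtype.ext hd⟩)
    ((mk_eq_mk_iff' F _ _ hv₂ hv₁).2 ⟨_, Subtype.ext hv⟩).symm

lemma range_submodule_fractionMap (hUV : IsSidonPair U V) :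
    Set.range (Projectivization.submodule ∘ fractionMap U V) = {W | ∃ α : K, α ≠ 0 ∧
      W = Submodule.span F {α} ∧ finrank F ↥(U ⊓ V.map (LinearMap.mulLeft F α)) = 1} := by
  ext W
  constructor
  · rintro ⟨⟨p, r⟩, rfl⟩
    induction p using ind with | h u hu =>
    induction r using ind with | h v hv =>
    have hu0 : (u : K) ≠ 0 := by simpa using hu
    have hv0 : (v : K) ≠ 0 := by simpa using hv
    exact ⟨_, mul_ne_zero hu0 (inv_ne_zero hv0), by simp [fractionMap_mk],
      hUV.finrank_inf_map_mulLeft_mul_inv u.2 v.2 hu0 hv0⟩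
  · rintro ⟨α, -, rfl, h⟩
    have hne : U ⊓ V.map (LinearMap.mulLeft F α) ≠ ⊥ := fun hbot ↦ by
      rw [hbot, finrank_bot] at h
      exact zero_ne_one h
    obtain ⟨u, hu, v, hv, hu0, hv0, rfl⟩ := exists_mul_inv_eq_of_inf_map_mulLeft_ne_bot hne
    refine ⟨(mk F ⟨u, hu⟩ (by simpa using hu0), mk F ⟨v, hv⟩ (by simpa using hv0)), ?_⟩
    simp [fractionMap_mk]

end IsSidonPair

theorem stmt_19_general (F K : Type) [Field F] [Field K] [Algebra F K]
    [Fintype F] [Fintype K] (q k : ℕ)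
    (hq : Fintype.card F = q)
    (U V : Submodule F K)
    (hkU : Module.finrank F U = k) (hkV : Module.finrank F V = k)
    (hSidon : ∀ α : K, α ≠ 0 →
      Module.finrank F ↥(U ⊓ Submodule.map (LinearMap.mulLeft F α) V) ≤ 1) :
    Nat.card {W : Submodule F K // ∃ α : K, α ≠ 0 ∧ W = Submodule.span F {α} ∧
        Module.finrank F ↥(U ⊓ Submodule.map (LinearMap.mulLeft F α) V) = 1}
      = ((q ^ k - 1) / (q - 1)) ^ 2 := by
  have hUV : IsSidonPair U V := hSidon
  have card_ℙ (W : Submodule F K) (hW : finrank F W = k) :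
      Nat.card (ℙ F W) = (q ^ k - 1) / (q - 1) := by
    rw [card'', Module.natCard_eq_pow_finrank (K := F), hW, Nat.card_eq_fintype_card, hq]
  calc _ = Nat.card (Set.range (Projectivization.submodule ∘ fractionMap U V)) := by
          rw [hUV.range_submodule_fractionMap]; rfl
    _ = Nat.card (ℙ F U × ℙ F V) :=
          Nat.card_range_of_injective (submodule_injective.comp hUV.fractionMap_injective)
    _ = _ := by rw [Nat.card_prod, card_ℙ U hkU, card_ℙ V hkV, sq]

/-- If `U, V` generate distinct orbits and have the two-space Sidon property,
then the number of classes `αF_q^*` with `dim(U ∩ αV) = 1` equals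
`((q^k-1)/(q-1))^2`. -/
theorem stmt_19 (F K : Type) [Field F] [Field K] [Algebra F K]
    [Fintype F] [Fintype K] (q n k : ℕ)
    (hq : Fintype.card F = q) (hn : Module.finrank F K = n)
    (U V : Submodule F K)
    (hkU : Module.finrank F U = k) (hkV : Module.finrank F V = k)
    (hdistinct : ∀ α : K, α ≠ 0 → U ≠ Submodule.map (LinearMap.mulLeft F α) V)
    (hSidon : ∀ α : K, α ≠ 0 →
      Module.finrank F ↥(U ⊓ Submodule.map (LinearMap.mulLeft F α) V) ≤ 1) :
    Nat.card {W : Submodule F K // ∃ α : K, α ≠ 0 ∧ W = Submodule.span F {α} ∧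
        Module.finrank F ↥(U ⊓ Submodule.map (LinearMap.mulLeft F α) V) = 1}
      = ((q ^ k - 1) / (q - 1)) ^ 2 :=
  stmt_19_general F K q k hq U V hkU hkV hSidon
end
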